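/- Let σ ∈ {1,−1}, let c_1,…,c_m be pairwise distinct positive real numbers and a_1,…,a_m ∈ ℝ. If there is a nonempty open interval I ⊂ (0,∞) such that 2 − σr²c_k > 0 for all k and all r ∈ I, and Σ_{k=1}^{m} a_k·(2 − σr²c_k)^{−3/2} = 0 for all r ∈ I, then a_1 = a_2 = … = a_m = 0. -/

import Mathlib

/-!
Differentiating `∑ aₖ (α - βₖ s)^q = 0` in `s` gives `∑ aₖ βₖ (α - βₖ s)^(q-1) = 0`, since
`q ≠ 0`. Iterating from `q = p` and evaluating at a point `s₀` with `uₖ = α - βₖ s₀` yields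
`∑ aₖ uₖ^p (βₖ / uₖ)^n = 0` for all `n`; the ratios `βₖ / uₖ` are distinct when `α ≠ 0`,
so the Vandermonde determinant forces `aₖ uₖ^p = 0`. The theorem is the case `s = r²`,
`α = 2`, `βₖ = σ cₖ`, `p = -3/2`.
-/

open Real Finset

section AffineRpow

variable {ι : Type*} [Fintype ι] {α : ℝ} {β a : ι → ℝ} {U : Set ℝ}

theorem sum_mul_mul_rpow_sub_one_eq_zero (hU : IsOpen U) {q : ℝ} (hq : q ≠ 0)
    (hpos : ∀ s ∈ U, ∀ k, 0 < α - β k * s)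
    (hsum : ∀ s ∈ U, ∑ k, a k * (α - β k * s) ^ q = 0) :
    ∀ s ∈ U, ∑ k, a k * β k * (α - β k * s) ^ (q - 1) = 0 := by
  intro s hs
  have hderiv : HasDerivAt (fun s ↦ ∑ k, a k * (α - β k * s) ^ q)
      (∑ k, a k * (-(β k * 1) * q * (α - β k * s) ^ (q - 1))) s :=
    HasDerivAt.fun_sum fun k _ ↦ (((hasDerivAt_id s).const_mul (β k)).const_sub α).rpow_const
      (Or.inl (hpos s hs k).ne') |>.const_mul (a k)
  have hzero : HasDerivAt (fun s ↦ ∑ k, a k * (α - β k * s) ^ q) 0 s :=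
    (hasDerivAt_const s 0).congr_of_eventuallyEq
      (Filter.eventually_of_mem (hU.mem_nhds hs) hsum)
  have hfactor : ∑ k, a k * (-(β k * 1) * q * (α - β k * s) ^ (q - 1))
      = -q * ∑ k, a k * β k * (α - β k * s) ^ (q - 1) := by
    rw [mul_sum]
    exact sum_congr rfl fun k _ ↦ by ring
  have h := hderiv.unique hzero
  rw [hfactor] at h
  exact (mul_eq_zero.mp h).resolve_left (neg_ne_zero.mpr hq)

theorem sum_mul_pow_mul_rpow_sub_natCast_eq_zero (hU : IsOpen U) {p : ℝ}
    (hp : ∀ n : ℕ, p ≠ n) (hpos : ∀ s ∈ U, ∀ k, 0 < α - β k * s)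
    (hsum : ∀ s ∈ U, ∑ k, a k * (α - β k * s) ^ p = 0) (n : ℕ) :
    ∀ s ∈ U, ∑ k, a k * β k ^ n * (α - β k * s) ^ (p - n) = 0 := by
  induction n with
  | zero => simpa using hsum
  | succ n ih =>
    have h := sum_mul_mul_rpow_sub_one_eq_zero hU (sub_ne_zero.mpr (hp n)) hpos ih
    intro s hs
    rw [← h s hs]
    refine sum_congr rfl fun k _ ↦ ?_
    rw [pow_succ, Nat.cast_succ, sub_add_eq_sub_sub]
    ring

end AffineRpow

theorem eq_zero_of_sum_mul_rpow_affine_eq_zero {m : ℕ} {α p : ℝ} {β a : Fin m → ℝ}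
    {U : Set ℝ} (hα : α ≠ 0) (hβ : Function.Injective β) (hp : ∀ n : ℕ, p ≠ n)
    (hU : IsOpen U) (hUne : U.Nonempty) (hpos : ∀ s ∈ U, ∀ k, 0 < α - β k * s)
    (hsum : ∀ s ∈ U, ∑ k, a k * (α - β k * s) ^ p = 0) :
    ∀ k, a k = 0 := by
  obtain ⟨s₀, hs₀⟩ := hUne
  set u : Fin m → ℝ := fun k ↦ α - β k * s₀
  have hu : ∀ k, 0 < u k := hpos s₀ hs₀
  have hratio : Function.Injective fun k ↦ β k / u k := by
    intro i j hij
    simp only [div_eq_div_iff (hu i).ne' (hu j).ne', u] at hij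
    exact hβ (mul_left_cancel₀ hα (by linear_combination hij))
  have hmoments : ∀ n : ℕ, ∑ k, a k * u k ^ p * (β k / u k) ^ n = 0 := by
    intro n
    rw [← sum_mul_pow_mul_rpow_sub_natCast_eq_zero hU hp hpos hsum n s₀ hs₀]
    refine sum_congr rfl fun k _ ↦ ?_
    rw [rpow_sub (hu k), rpow_natCast, div_pow]
    ring
  have hvanish := Matrix.eq_zero_of_forall_pow_sum_mul_pow_eq_zero hratio fun n ↦ hmoments n
  intro k
  exact (mul_eq_zero.mp (congr_fun hvanish k)).resolve_right (rpow_pos_of_pos (hu k) p).ne'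

theorem linear_independence_of_inverse_power_family
    (σ : ℝ) (hσ : σ = 1 ∨ σ = -1) (M : ℕ) (c a : Fin M → ℝ)
    (hcinj : Function.Injective c)
    (I : Set ℝ) (hIo : IsOpen I) (hIne : I.Nonempty) (hIsub : I ⊆ Set.Ioi 0)
    (hpos : ∀ r ∈ I, ∀ k, 0 < 2 - σ * r ^ 2 * c k)
    (hsum : ∀ r ∈ I, ∑ k, a k * (2 - σ * r ^ 2 * c k) ^ (-(3 : ℝ) / 2) = 0) :
    ∀ k, a k = 0 := by
  have hσ0 : σ ≠ 0 := by rcases hσ with rfl | rfl <;> norm_num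
  have hp : ∀ n : ℕ, -(3 : ℝ) / 2 ≠ n := fun n h ↦ by linarith [n.cast_nonneg (α := ℝ)]
  obtain ⟨r₀, hr₀⟩ := hIne
  have hr₀pos : 0 < r₀ := hIsub hr₀
  -- the image of `I` under `r ↦ r²`
  set U := sqrt ⁻¹' I ∩ Set.Ioi 0
  have hU : IsOpen U := (hIo.preimage continuous_sqrt).inter isOpen_Ioi
  have hUne : U.Nonempty :=
    ⟨r₀ ^ 2, by simpa [sqrt_sq hr₀pos.le] using hr₀, pow_pos hr₀pos 2⟩
  have hsq : ∀ s ∈ U, ∀ k, σ * √s ^ 2 * c k = σ * c k * s := fun s hs k ↦ by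
    rw [sq_sqrt hs.2.le, mul_right_comm]
  refine eq_zero_of_sum_mul_rpow_affine_eq_zero (β := fun k ↦ σ * c k) two_ne_zero
    (fun i j h ↦ hcinj (mul_left_cancel₀ hσ0 h)) hp hU hUne
    (fun s hs k ↦ hsq s hs k ▸ hpos _ hs.1 k) (fun s hs ↦ ?_)
  simpa only [hsq s hs] using hsum _ hs.1
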